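/- arXiv:2108.11713 — 6 statements merged into one kernel-verified Lean document; each statement's English description precedes it below -/
import Mathlib

section
/- Under the setting of Algorithm 1, fix a (deterministic) vector x ∈ ℝ^d and assume unbiasedness at x. Then for every k ∈ ℕ: E[‖x_{k+1} − x‖²_{H_k}] ≤ E[‖x_k − x‖²_{H_k}] + α_k²·E[‖w_k‖²_{H_k}] + 2α_k·{ ((1−β_k)/(s·(1−γ^{k+1})))·E[⟨x − x_k, ∇f(x_k)⟩] + (β_k/(1−γ^{k+1}))·E[⟨x − x_k, m_{k−1}⟩] }. -/
open MeasureTheory Finset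
open scoped RealInnerProductSpace BigOperators

/-- Lemma A.1.  Here `mp k` denotes the momentum term `m_{k-1}` of the paper
(so `mp 0 = m_{-1} = 0` and `mp (k+1) = m_k`), `x k`, `w k`, `g k` are the iterates,
search directions and stochastic gradients of Algorithm 1, and the diagonal matrix
`H_k = diag (h k · i)`.  The `H_k`-norm squared of `u` is `∑ i, h k ω i * (u i)^2`
and `⟪u, H_k v⟫ = ∑ i, h k ω i * u i * v i`. -/
theorem lemma_A1
    {Ω : Type*} [MeasurableSpace Ω] (μ : Measure Ω) [IsProbabilityMeasure μ]
    (d n : ℕ) (hd : 0 < d) (hn : 0 < n) (s G : ℝ) (hs : 0 < s) (hG : 0 < G)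
    (b γ : ℝ) (hb : 0 ≤ b) (hb1 : b < 1) (hγ : 0 ≤ γ) (hγ1 : γ < 1)
    (α β : ℕ → ℝ) (hα : ∀ k, α k ∈ Set.Ioc (0 : ℝ) 1) (hβ : ∀ k, β k ∈ Set.Icc 0 b)
    (f : EuclideanSpace ℝ (Fin d) → ℝ)
    (gradf : EuclideanSpace ℝ (Fin d) → EuclideanSpace ℝ (Fin d))
    (hf : ∀ z, HasGradientAt f (gradf z) z)
    (x w g mp : ℕ → Ω → EuclideanSpace ℝ (Fin d))
    (h : ℕ → Ω → Fin d → ℝ)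
    (hpos : ∀ᵐ ω ∂μ, ∀ k i, 0 < h k ω i)
    (hm0 : ∀ ω, mp 0 ω = 0)
    (hmrec : ∀ᵐ ω ∂μ, ∀ k, mp (k + 1) ω = β k • mp k ω + (1 - β k) • g k ω)
    (hwdef : ∀ᵐ ω ∂μ, ∀ k i, h k ω i * w k ω i = -(mp (k + 1) ω i) / (1 - γ ^ (k + 1)))
    (hxrec : ∀ᵐ ω ∂μ, ∀ k, x (k + 1) ω = x k ω + α k • w k ω)
    (xd : EuclideanSpace ℝ (Fin d))
    (hunbias : ∀ k, ∫ ω, ⟪xd - x k ω, g k ω⟫ ∂μ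
      = (1 / s) * ∫ ω, ⟪xd - x k ω, gradf (x k ω)⟫ ∂μ)
    (hint1 : ∀ k j, Integrable (fun ω => ∑ i, h k ω i * (x j ω i - xd i) ^ 2) μ)
    (hint2 : ∀ k, Integrable (fun ω => ∑ i, h k ω i * (w k ω i) ^ 2) μ)
    (hint3 : ∀ k, Integrable (fun ω => ⟪xd - x k ω, gradf (x k ω)⟫) μ)
    (hint4 : ∀ k, Integrable (fun ω => ⟪xd - x k ω, mp k ω⟫) μ)
    (hint5 : ∀ k, Integrable (fun ω => ⟪xd - x k ω, g k ω⟫) μ) :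
    ∀ k : ℕ, ∫ ω, (∑ i, h k ω i * (x (k + 1) ω i - xd i) ^ 2) ∂μ
      ≤ ∫ ω, (∑ i, h k ω i * (x k ω i - xd i) ^ 2) ∂μ
        + (α k) ^ 2 * ∫ ω, (∑ i, h k ω i * (w k ω i) ^ 2) ∂μ
        + 2 * α k *
          (((1 - β k) / (s * (1 - γ ^ (k + 1)))) *
              ∫ ω, ⟪xd - x k ω, gradf (x k ω)⟫ ∂μ
            + (β k / (1 - γ ^ (k + 1))) * ∫ ω, ⟪xd - x k ω, mp k ω⟫ ∂μ) := by
  intro k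
  have hcpos : 0 < 1 - γ ^ (k + 1) := by
    have h1 : γ ^ (k + 1) < 1 := pow_lt_one₀ hγ hγ1 (by omega)
    linarith
  have hc0 : (1 : ℝ) - γ ^ (k + 1) ≠ 0 := ne_of_gt hcpos
  have hae : (fun ω => ∑ i, h k ω i * (x (k + 1) ω i - xd i) ^ 2) =ᵐ[μ]
      (fun ω => (∑ i, h k ω i * (x k ω i - xd i) ^ 2)
        + (α k) ^ 2 * (∑ i, h k ω i * (w k ω i) ^ 2)
        + 2 * α k * ((β k / (1 - γ ^ (k + 1))) * ⟪xd - x k ω, mp k ω⟫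
            + ((1 - β k) / (1 - γ ^ (k + 1))) * ⟪xd - x k ω, g k ω⟫)) := by
    filter_upwards [hmrec, hwdef, hxrec] with ω hm hw hx
    simp only [PiLp.inner_apply, RCLike.inner_apply, conj_trivial, PiLp.sub_apply]
    rw [hx k]
    simp only [PiLp.add_apply, PiLp.smul_apply, smul_eq_mul, mul_add, Finset.mul_sum]
    rw [← Finset.sum_add_distrib, ← Finset.sum_add_distrib, ← Finset.sum_add_distrib]
    refine Finset.sum_congr rfl fun i _ => ?_
    have hmi : mp (k + 1) ω i = β k * mp k ω i + (1 - β k) * g k ω i := by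
      rw [hm k]; simp [PiLp.add_apply, PiLp.smul_apply, smul_eq_mul]
    have hw2 : h k ω i * w k ω i
        = -(β k * mp k ω i + (1 - β k) * g k ω i) / (1 - γ ^ (k + 1)) := by
      rw [hw k i, hmi]
    linear_combination (2 * α k * (x k ω i - xd i)) * hw2
  rw [integral_congr_ae hae]
  have I1 : Integrable (fun ω => ∑ i, h k ω i * (x k ω i - xd i) ^ 2) μ := hint1 k k
  have I2 : Integrable (fun ω => (α k) ^ 2 * ∑ i, h k ω i * (w k ω i) ^ 2) μ :=
    (hint2 k).const_mul _
  have I4 : Integrable (fun ω => (β k / (1 - γ ^ (k + 1))) * ⟪xd - x k ω, mp k ω⟫) μ :=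
    (hint4 k).const_mul _
  have I5 : Integrable (fun ω => ((1 - β k) / (1 - γ ^ (k + 1))) * ⟪xd - x k ω, g k ω⟫) μ :=
    (hint5 k).const_mul _
  have I45 : Integrable (fun ω => (β k / (1 - γ ^ (k + 1))) * ⟪xd - x k ω, mp k ω⟫
      + ((1 - β k) / (1 - γ ^ (k + 1))) * ⟪xd - x k ω, g k ω⟫) μ := I4.add I5
  have I12 : Integrable (fun ω => (∑ i, h k ω i * (x k ω i - xd i) ^ 2)
      + (α k) ^ 2 * ∑ i, h k ω i * (w k ω i) ^ 2) μ := I1.add I2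
  have I45c : Integrable (fun ω => 2 * α k *
      ((β k / (1 - γ ^ (k + 1))) * ⟪xd - x k ω, mp k ω⟫
        + ((1 - β k) / (1 - γ ^ (k + 1))) * ⟪xd - x k ω, g k ω⟫)) μ := I45.const_mul _
  rw [integral_add I12 I45c, integral_add I1 I2, integral_const_mul,
    integral_const_mul, integral_add I4 I5, integral_const_mul, integral_const_mul,
    hunbias k]
  apply le_of_eq
  field_simp
  ring
end

section
/- Under the setting of Algorithm 1, assume (A3) and (A4). Then for every k ∈ ℕ: E[‖w_k‖²_{H_k}] ≤ G²/((1−γ)²·h_0^*·s²), where h_0^* := min_{i∈{1,…,d}} h_{0,i}. -/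
open MeasureTheory Finset

/-!
Since `‖·‖²` is convex, the moving average `m_k` of the stochastic gradients inherits their
second-moment bound `E‖m_k‖² ≤ G²/s²`. Pointwise, `H_k w_k = -m_k/(1-γ^{k+1})` gives
`‖w_k‖²_{H_k} = ‖m_k‖²_{H_k⁻¹}/(1-γ^{k+1})²`, and (A4) yields `H_k ≥ h₀* I`, while
`1-γ^{k+1} ≥ 1-γ`.
-/

theorem norm_sq_convex_comb_le {E : Type*} [SeminormedAddCommGroup E] [NormedSpace ℝ E]
    {a : ℝ} (ha₀ : 0 ≤ a) (ha₁ : a ≤ 1) (x y : E) :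
    ‖a • x + (1 - a) • y‖ ^ 2 ≤ a * ‖x‖ ^ 2 + (1 - a) * ‖y‖ ^ 2 := by
  have hnorm : ‖a • x + (1 - a) • y‖ ≤ a * ‖x‖ + (1 - a) * ‖y‖ := by
    refine (norm_add_le _ _).trans_eq ?_
    rw [norm_smul, norm_smul, Real.norm_of_nonneg ha₀, Real.norm_of_nonneg (by linarith)]
  calc ‖a • x + (1 - a) • y‖ ^ 2 ≤ (a * ‖x‖ + (1 - a) * ‖y‖) ^ 2 := by gcongr
    _ = a * ‖x‖ ^ 2 + (1 - a) * ‖y‖ ^ 2 - a * (1 - a) * (‖x‖ - ‖y‖) ^ 2 := by ring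
    _ ≤ a * ‖x‖ ^ 2 + (1 - a) * ‖y‖ ^ 2 :=
      sub_le_self _ (mul_nonneg (mul_nonneg ha₀ (by linarith)) (sq_nonneg _))

theorem integral_norm_sq_le_of_ema {Ω E : Type*} [MeasurableSpace Ω] {μ : Measure Ω}
    [NormedAddCommGroup E] [NormedSpace ℝ E] {β : ℕ → ℝ} {m g : ℕ → Ω → E} {C : ℝ}
    (hβ : ∀ k, β k ∈ Set.Icc 0 1) (hm0 : ∀ ω, m 0 ω = 0)
    (hrec : ∀ᵐ ω ∂μ, ∀ k, m (k + 1) ω = β k • m k ω + (1 - β k) • g k ω)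
    (hgint : ∀ k, Integrable (fun ω => ‖g k ω‖ ^ 2) μ)
    (hmint : ∀ k, Integrable (fun ω => ‖m k ω‖ ^ 2) μ)
    (hg : ∀ k, ∫ ω, ‖g k ω‖ ^ 2 ∂μ ≤ C) :
    ∀ k, ∫ ω, ‖m k ω‖ ^ 2 ∂μ ≤ C := by
  intro k
  induction k with
  | zero =>
    simpa [hm0] using (integral_nonneg fun ω => sq_nonneg ‖g 0 ω‖).trans (hg 0)
  | succ k ih =>
    obtain ⟨hβ₀, hβ₁⟩ := hβ k
    have hconv : ∀ᵐ ω ∂μ, ‖m (k + 1) ω‖ ^ 2 ≤ β k * ‖m k ω‖ ^ 2 + (1 - β k) * ‖g k ω‖ ^ 2 := by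
      filter_upwards [hrec] with ω hω
      rw [hω k]
      exact norm_sq_convex_comb_le hβ₀ hβ₁ _ _
    calc ∫ ω, ‖m (k + 1) ω‖ ^ 2 ∂μ
        ≤ ∫ ω, (β k * ‖m k ω‖ ^ 2 + (1 - β k) * ‖g k ω‖ ^ 2) ∂μ :=
          integral_mono_ae (hmint (k + 1))
            (((hmint k).const_mul _).add ((hgint k).const_mul _)) hconv
      _ = β k * ∫ ω, ‖m k ω‖ ^ 2 ∂μ + (1 - β k) * ∫ ω, ‖g k ω‖ ^ 2 ∂μ := by
          rw [integral_add ((hmint k).const_mul _) ((hgint k).const_mul _),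
            integral_const_mul, integral_const_mul]
      _ ≤ β k * C + (1 - β k) * C := by
          have : 0 ≤ 1 - β k := by linarith
          gcongr
          exact hg k
      _ = C := by ring

theorem mul_sq_le_sq_div {a c : ℝ} (hc : 0 < c) (hca : c ≤ a) (u : ℝ) :
    a * u ^ 2 ≤ (a * u) ^ 2 / c := by
  rw [le_div_iff₀ hc]
  calc a * u ^ 2 * c ≤ a * u ^ 2 * a := by gcongr; nlinarith [sq_nonneg u]
    _ = (a * u) ^ 2 := by ring

theorem sum_mul_sq_le_norm_sq_div {ι : Type*} [Fintype ι] {a : ι → ℝ} {u v : EuclideanSpace ℝ ι}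
    {c t τ : ℝ} (hc : 0 < c) (hca : ∀ i, c ≤ a i) (hτ : 0 < τ) (hτt : τ ≤ t)
    (huv : ∀ i, a i * u i = v i / t) :
    ∑ i, a i * u i ^ 2 ≤ ‖v‖ ^ 2 / (τ ^ 2 * c) := by
  calc ∑ i, a i * u i ^ 2 ≤ ∑ i, (a i * u i) ^ 2 / c :=
        sum_le_sum fun i _ => mul_sq_le_sq_div hc (hca i) (u i)
    _ = ‖v‖ ^ 2 / (t ^ 2 * c) := by
        simp only [huv, div_pow, EuclideanSpace.real_norm_sq_eq, sum_div, div_div]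
    _ ≤ ‖v‖ ^ 2 / (τ ^ 2 * c) := by gcongr

-- `mp k` is the paper's `m_{k-1}`, so `hm0` encodes `m_{-1} = 0`.
theorem lemma_A2_direction_bound_general
    {Ω : Type*} [MeasurableSpace Ω] (μ : Measure Ω) [IsProbabilityMeasure μ]
    (d : ℕ) (hd : 0 < d) (s G : ℝ)
    (b γ : ℝ) (hb1 : b < 1) (hγ : 0 ≤ γ) (hγ1 : γ < 1)
    (β : ℕ → ℝ) (hβ : ∀ k, β k ∈ Set.Icc 0 b)
    (w g mp : ℕ → Ω → EuclideanSpace ℝ (Fin d))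
    (h : ℕ → Ω → Fin d → ℝ) (h0 : Fin d → ℝ)
    (hpos : ∀ᵐ ω ∂μ, ∀ k i, 0 < h k ω i)
    (hdet : ∀ ω, h 0 ω = h0)
    (hm0 : ∀ ω, mp 0 ω = 0)
    (hmrec : ∀ᵐ ω ∂μ, ∀ k, mp (k + 1) ω = β k • mp k ω + (1 - β k) • g k ω)
    (hwdef : ∀ᵐ ω ∂μ, ∀ k i, h k ω i * w k ω i = -(mp (k + 1) ω i) / (1 - γ ^ (k + 1)))
    -- (A3)
    (hgint : ∀ k, Integrable (fun ω => ‖g k ω‖ ^ 2) μ)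
    (hmint : ∀ k, Integrable (fun ω => ‖mp k ω‖ ^ 2) μ)
    (hgbdd : ∀ k, ∫ ω, ‖g k ω‖ ^ 2 ∂μ ≤ G ^ 2 / s ^ 2)
    -- (A4)
    (hA4 : ∀ᵐ ω ∂μ, ∀ k i, h k ω i ≤ h (k + 1) ω i)
    (hwint : ∀ k, Integrable (fun ω => ∑ i, h k ω i * (w k ω i) ^ 2) μ) :
    ∀ k : ℕ, ∫ ω, (∑ i, h k ω i * (w k ω i) ^ 2) ∂μ
      ≤ G ^ 2 / ((1 - γ) ^ 2 * (Finset.univ.inf' ⟨⟨0, hd⟩, Finset.mem_univ _⟩ h0) * s ^ 2) := by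
  intro k
  set h0s := Finset.univ.inf' ⟨⟨0, hd⟩, Finset.mem_univ _⟩ h0
  have hh0s : 0 < h0s := by
    obtain ⟨ω, hω⟩ := hpos.exists
    exact (lt_inf'_iff _).mpr fun i _ => hdet ω ▸ hω 0 i
  have hγk : 1 - γ ≤ 1 - γ ^ (k + 1) := by
    linarith [pow_le_of_le_one hγ hγ1.le k.add_one_ne_zero]
  have hmb := integral_norm_sq_le_of_ema (fun k => ⟨(hβ k).1, (hβ k).2.trans hb1.le⟩)
    hm0 hmrec hgint hmint hgbdd (k + 1)
  have hpt : ∀ᵐ ω ∂μ, ∑ i, h k ω i * (w k ω i) ^ 2 ≤ ‖mp (k + 1) ω‖ ^ 2 / ((1 - γ) ^ 2 * h0s) := by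
    filter_upwards [hwdef, hA4] with ω hw hmono
    have hh0k : ∀ i, h0s ≤ h k ω i := fun i =>
      calc h0s ≤ h 0 ω i := hdet ω ▸ inf'_le _ (mem_univ i)
        _ ≤ h k ω i := monotone_nat_of_le_succ (fun j => hmono j i) (Nat.zero_le k)
    simpa only [norm_neg] using sum_mul_sq_le_norm_sq_div (v := -mp (k + 1) ω) hh0s hh0k
      (by linarith) hγk fun i => by rw [hw k i, PiLp.neg_apply]
  calc ∫ ω, (∑ i, h k ω i * (w k ω i) ^ 2) ∂μ
      ≤ ∫ ω, ‖mp (k + 1) ω‖ ^ 2 / ((1 - γ) ^ 2 * h0s) ∂μ :=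
        integral_mono_ae (hwint k) ((hmint (k + 1)).div_const _) hpt
    _ = (∫ ω, ‖mp (k + 1) ω‖ ^ 2 ∂μ) / ((1 - γ) ^ 2 * h0s) := integral_div _ _
    _ ≤ (G ^ 2 / s ^ 2) / ((1 - γ) ^ 2 * h0s) := by gcongr
    _ = G ^ 2 / ((1 - γ) ^ 2 * h0s * s ^ 2) := by rw [div_div, mul_comm (s ^ 2)]

/-- Second assertion of Lemma A.2.  Here `mp k` denotes `m_{k-1}` of the paper
(so `mp 0 = 0`), `w k` is the search direction of Algorithm 1 with
`H_k w_k = -m_k/(1-γ^{k+1})` where `H_k = diag (h k · i)`, assumption (A3) is the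
second-moment bound on the stochastic gradients `g k`, and (A4) is the a.s.
monotonicity of the diagonal entries with deterministic initial entries `h0`.
The `H_k`-norm squared of `u` is `∑ i, h k ω i * (u i)^2`, and
`h0* = min_i h0 i` is formalized as `Finset.univ.inf' _ h0`. -/
theorem lemma_A2_direction_bound
    {Ω : Type*} [MeasurableSpace Ω] (μ : Measure Ω) [IsProbabilityMeasure μ]
    (d n : ℕ) (hd : 0 < d) (hn : 0 < n) (s G : ℝ) (hs : 0 < s) (hG : 0 < G)
    (b γ : ℝ) (hb : 0 ≤ b) (hb1 : b < 1) (hγ : 0 ≤ γ) (hγ1 : γ < 1)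
    (α β : ℕ → ℝ) (hα : ∀ k, α k ∈ Set.Ioc (0 : ℝ) 1) (hβ : ∀ k, β k ∈ Set.Icc 0 b)
    (x w g mp : ℕ → Ω → EuclideanSpace ℝ (Fin d))
    (h : ℕ → Ω → Fin d → ℝ) (h0 : Fin d → ℝ)
    (hpos : ∀ᵐ ω ∂μ, ∀ k i, 0 < h k ω i)
    (hdet : ∀ ω, h 0 ω = h0)
    (hm0 : ∀ ω, mp 0 ω = 0)
    (hmrec : ∀ᵐ ω ∂μ, ∀ k, mp (k + 1) ω = β k • mp k ω + (1 - β k) • g k ω)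
    (hwdef : ∀ᵐ ω ∂μ, ∀ k i, h k ω i * w k ω i = -(mp (k + 1) ω i) / (1 - γ ^ (k + 1)))
    (hxrec : ∀ᵐ ω ∂μ, ∀ k, x (k + 1) ω = x k ω + α k • w k ω)
    -- (A3)
    (hgint : ∀ k, Integrable (fun ω => ‖g k ω‖ ^ 2) μ)
    (hmint : ∀ k, Integrable (fun ω => ‖mp k ω‖ ^ 2) μ)
    (hgbdd : ∀ k, ∫ ω, ‖g k ω‖ ^ 2 ∂μ ≤ G ^ 2 / s ^ 2)
    -- (A4)
    (hA4 : ∀ᵐ ω ∂μ, ∀ k i, h k ω i ≤ h (k + 1) ω i)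
    (hwint : ∀ k, Integrable (fun ω => ∑ i, h k ω i * (w k ω i) ^ 2) μ) :
    ∀ k : ℕ, ∫ ω, (∑ i, h k ω i * (w k ω i) ^ 2) ∂μ
      ≤ G ^ 2 / ((1 - γ) ^ 2 * (Finset.univ.inf' ⟨⟨0, hd⟩, Finset.mem_univ _⟩ h0) * s ^ 2) :=
  lemma_A2_direction_bound_general μ d hd s G b γ hb1 hγ hγ1 β hβ w g mp h h0 hpos hdet hm0 hmrec
    hwdef hgint hmint hgbdd hA4 hwint
end

section
/- Let A, B, ε > 0 and C ≥ 0, and define K : (0, ∞) → ℝ by K(s) := [ ((A·s² + B) + √((A·s² + B)² + 4·ε²·C·s²)) / (2·ε²·s) ]². Then K is strictly decreasing on (0, √(B/A)], strictly increasing on [√(B/A), ∞), and attains its minimum over (0, ∞) uniquely at s* = √(B/A), with minimum value K(s*) = ( (√(A·B) + √(A·B + ε²·C)) / ε² )². -/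
/-!
Dividing numerator and denominator by `s` gives `K(s) = g(A s + B / s)` with
`g(v) = ((v + √(v² + 4ε²C)) / (2ε²))²`, which is strictly increasing for `v ≥ 0`. So `K` inherits
the monotonicity of `s ↦ A s + B / s`, which decreases up to `√(B/A)` and increases after it,
where its value is `2√(AB)`.
-/

open Real Set

lemma StrictAntiOn.lt_of_strictMonoOn_Ici {f : ℝ → ℝ} {a r s : ℝ}
    (hanti : StrictAntiOn f (Ioc a r)) (hmono : StrictMonoOn f (Ici r))
    (has : a < s) (hsr : s ≠ r) : f r < f s := by
  rcases hsr.lt_or_gt with hlt | hgt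
  · exact hanti ⟨has, hlt.le⟩ ⟨has.trans hlt, le_rfl⟩ hlt
  · exact hmono self_mem_Ici hgt.le hgt

lemma strictMonoOn_add_sqrt_sq_add_div_sq {c d : ℝ} (hc : 0 ≤ c) (hd : 0 < d) :
    StrictMonoOn (fun v => ((v + √(v ^ 2 + c)) / d) ^ 2) (Ici 0) := by
  intro v (hv : 0 ≤ v) w _ hvw
  have hsqrt : √(v ^ 2 + c) ≤ √(w ^ 2 + c) := Real.sqrt_le_sqrt (by nlinarith)
  have hlt : (v + √(v ^ 2 + c)) / d < (w + √(w ^ 2 + c)) / d := by gcongr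
  exact pow_lt_pow_left₀ hlt (by positivity) two_ne_zero

section MulAddDiv

variable {A B : ℝ}

lemma sq_sqrt_div_mul (hA : 0 < A) (hB : 0 ≤ B) : √(B / A) ^ 2 * A = B := by
  rw [sq_sqrt (by positivity), div_mul_cancel₀ _ hA.ne']

lemma mul_add_div_sub_mul_add_div {s t : ℝ} (hs : s ≠ 0) (ht : t ≠ 0) :
    (A * s + B / s) - (A * t + B / t) = (t - s) * (B - A * (s * t)) / (s * t) := by
  field_simp
  ring

lemma strictAntiOn_mul_add_div (hA : 0 < A) (hB : 0 ≤ B) :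
    StrictAntiOn (fun s => A * s + B / s) (Ioc 0 √(B / A)) := by
  rintro s ⟨hs, -⟩ t ⟨ht, htr⟩ hst
  have hst_lt : A * (s * t) < B := by
    have : s * t < √(B / A) ^ 2 := by nlinarith
    nlinarith [sq_sqrt_div_mul hA hB]
  rw [← sub_pos, mul_add_div_sub_mul_add_div hs.ne' ht.ne']
  exact div_pos (mul_pos (by linarith) (by linarith)) (by positivity)

lemma strictMonoOn_mul_add_div (hA : 0 < A) (hB : 0 < B) :
    StrictMonoOn (fun s => A * s + B / s) (Ici √(B / A)) := by
  intro s (hrs : √(B / A) ≤ s) t _ hst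
  have hs : 0 < s := (sqrt_pos.mpr (div_pos hB hA)).trans_le hrs
  have ht : 0 < t := hs.trans hst
  have hst_gt : B < A * (s * t) := by
    have : √(B / A) ^ 2 < s * t := by nlinarith [sqrt_nonneg (B / A)]
    nlinarith [sq_sqrt_div_mul hA hB.le]
  rw [← sub_neg, mul_add_div_sub_mul_add_div hs.ne' ht.ne']
  exact div_neg_of_neg_of_pos (mul_neg_of_pos_of_neg (by linarith) (by linarith)) (by positivity)

lemma mul_add_div_sqrt_div (hA : 0 < A) (hB : 0 < B) :
    A * √(B / A) + B / √(B / A) = 2 * √(A * B) := by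
  have hr : 0 < √(B / A) := sqrt_pos.mpr (div_pos hB hA)
  set r := √(B / A)
  have hB_eq : B = r ^ 2 * A := (sq_sqrt_div_mul hA hB.le).symm
  have hsqrt : √(A * B) = A * r := by
    rw [show A * B = (A * r) ^ 2 by rw [hB_eq]; ring, sqrt_sq (by positivity)]
  rw [hsqrt, hB_eq]
  field_simp
  ring

end MulAddDiv

lemma eqOn_comp_mul_add_div (A B C ε : ℝ) :
    EqOn (fun s : ℝ => (((A * s ^ 2 + B)
          + √((A * s ^ 2 + B) ^ 2 + 4 * ε ^ 2 * C * s ^ 2)) / (2 * ε ^ 2 * s)) ^ 2)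
      ((fun v => ((v + √(v ^ 2 + 4 * ε ^ 2 * C)) / (2 * ε ^ 2)) ^ 2) ∘ fun s => A * s + B / s)
      (Ioi 0) := by
  intro s (hs : 0 < s)
  have hnum : A * s ^ 2 + B = s * (A * s + B / s) := by field_simp
  have hrad : (A * s ^ 2 + B) ^ 2 + 4 * ε ^ 2 * C * s ^ 2
      = s ^ 2 * ((A * s + B / s) ^ 2 + 4 * ε ^ 2 * C) := by rw [hnum]; ring
  simp only [Function.comp_apply]
  rw [hrad, sqrt_mul (sq_nonneg s), sqrt_sq hs.le, hnum, ← mul_add,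
    show 2 * ε ^ 2 * s = s * (2 * ε ^ 2) by ring, mul_div_mul_left _ _ hs.ne']

lemma two_mul_add_sqrt_div_two_mul (x a b d : ℝ) :
    (2 * x + √((2 * x) ^ 2 + 4 * a * b)) / (2 * d) = (x + √(x ^ 2 + a * b)) / d := by
  rw [show (2 * x) ^ 2 + 4 * a * b = 2 ^ 2 * (x ^ 2 + a * b) by ring, sqrt_mul (by norm_num),
    sqrt_sq zero_le_two, ← mul_add, mul_div_mul_left _ _ two_ne_zero]

/-- The rational-function minimization underlying Theorem A.4(ii):
`K(s) = (((A s² + B) + √((A s² + B)² + 4 ε² C s²))/(2 ε² s))²` on `(0, ∞)` is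
strictly decreasing on `(0, √(B/A)]`, strictly increasing on `[√(B/A), ∞)`, and
attains its minimum uniquely at `s* = √(B/A)` with value
`((√(AB) + √(AB + ε²C))/ε²)²`. -/
theorem rational_min_geometric_momentum (A B C ε : ℝ)
    (hA : 0 < A) (hB : 0 < B) (hε : 0 < ε) (hC : 0 ≤ C) :
    StrictAntiOn
      (fun s : ℝ => (((A * s ^ 2 + B)
          + Real.sqrt ((A * s ^ 2 + B) ^ 2 + 4 * ε ^ 2 * C * s ^ 2))
        / (2 * ε ^ 2 * s)) ^ 2)
      (Set.Ioc 0 (Real.sqrt (B / A))) ∧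
    StrictMonoOn
      (fun s : ℝ => (((A * s ^ 2 + B)
          + Real.sqrt ((A * s ^ 2 + B) ^ 2 + 4 * ε ^ 2 * C * s ^ 2))
        / (2 * ε ^ 2 * s)) ^ 2)
      (Set.Ici (Real.sqrt (B / A))) ∧
    (((A * Real.sqrt (B / A) ^ 2 + B)
        + Real.sqrt ((A * Real.sqrt (B / A) ^ 2 + B) ^ 2
            + 4 * ε ^ 2 * C * Real.sqrt (B / A) ^ 2))
      / (2 * ε ^ 2 * Real.sqrt (B / A))) ^ 2
      = ((Real.sqrt (A * B) + Real.sqrt (A * B + ε ^ 2 * C)) / ε ^ 2) ^ 2 ∧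
    (∀ s : ℝ, 0 < s → s ≠ Real.sqrt (B / A) →
      ((Real.sqrt (A * B) + Real.sqrt (A * B + ε ^ 2 * C)) / ε ^ 2) ^ 2
        < (((A * s ^ 2 + B)
            + Real.sqrt ((A * s ^ 2 + B) ^ 2 + 4 * ε ^ 2 * C * s ^ 2))
          / (2 * ε ^ 2 * s)) ^ 2) := by
  have hr : 0 < √(B / A) := sqrt_pos.mpr (div_pos hB hA)
  have hK := eqOn_comp_mul_add_div A B C ε
  have hg := strictMonoOn_add_sqrt_sq_add_div_sq (c := 4 * ε ^ 2 * C) (d := 2 * ε ^ 2)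
    (by positivity) (by positivity)
  have hu : MapsTo (fun s => A * s + B / s) (Ioi 0) (Ici 0) :=
    fun s (hs : 0 < s) => mem_Ici.mpr (by positivity)
  have hanti : StrictAntiOn _ (Ioc 0 √(B / A)) :=
    (hg.comp_strictAntiOn (strictAntiOn_mul_add_div hA hB.le)
      (hu.mono_left Ioc_subset_Ioi_self)).congr (hK.symm.mono Ioc_subset_Ioi_self)
  have hmono : StrictMonoOn _ (Ici √(B / A)) :=
    (hg.comp (strictMonoOn_mul_add_div hA hB) (hu.mono_left (Ici_subset_Ioi.mpr hr))).congr
      (hK.symm.mono (Ici_subset_Ioi.mpr hr))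
  have hmin := hK hr
  rw [Function.comp_apply, mul_add_div_sqrt_div hA hB, two_mul_add_sqrt_div_two_mul,
    sq_sqrt (by positivity)] at hmin
  beta_reduce at hmin
  exact ⟨hanti, hmono, hmin, fun s hs hsr => hmin ▸ hanti.lt_of_strictMonoOn_Ici hmono hs hsr⟩
end

section
/- Let G, α, ε, d, D > 0, b ∈ [0,1), γ ∈ [0,1), h_0^* > 0, and β ∈ ℝ with 0 ≤ β < (1−b)·ε²/(√(d·D)·G). If (1−γ)² ≤ 1/h_0^*, then G²·α/ε² ≤ G²·α/((1−γ)²·((1−b)·ε² − √(d·D)·G·β)·h_0^*). -/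
/-- Comparison of optimal batch sizes under constant learning rates:
if `(1−γ)² ≤ 1/h0*`, then `s*_{C,SGD} = G²α/ε² ≤ s*_{C,A} =
G²α/((1−γ)²((1−b)ε² − √(dD)Gβ)h0*)`, i.e. Adam-type optimizers exploit larger
batches than SGD. -/
theorem optimal_batch_SGD_le_Adam (G α ε d D b γ h0star β : ℝ)
    (hG : 0 < G) (hα : 0 < α) (hε : 0 < ε) (hd : 0 < d) (hD : 0 < D)
    (hb0 : 0 ≤ b) (hb1 : b < 1) (hγ0 : 0 ≤ γ) (hγ1 : γ < 1) (hh0 : 0 < h0star)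
    (hβ0 : 0 ≤ β) (hβ : β < (1 - b) * ε ^ 2 / (Real.sqrt (d * D) * G))
    (hcond : (1 - γ) ^ 2 ≤ 1 / h0star) :
    G ^ 2 * α / ε ^ 2
      ≤ G ^ 2 * α
        / ((1 - γ) ^ 2 * ((1 - b) * ε ^ 2 - Real.sqrt (d * D) * G * β) * h0star) := by
  have hsq : 0 < Real.sqrt (d * D) := Real.sqrt_pos.mpr (by positivity)
  have hT : 0 < (1 - b) * ε ^ 2 - Real.sqrt (d * D) * G * β := by
    have := (lt_div_iff₀ (by positivity : 0 < Real.sqrt (d * D) * G)).mp hβ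
    nlinarith
  have hγpos : 0 < (1 - γ) ^ 2 := by nlinarith
  have hdenpos : 0 < (1 - γ) ^ 2 * ((1 - b) * ε ^ 2 - Real.sqrt (d * D) * G * β) * h0star := by
    exact mul_pos (mul_pos hγpos hT) hh0
  have hden_le : (1 - γ) ^ 2 * ((1 - b) * ε ^ 2 - Real.sqrt (d * D) * G * β) * h0star
      ≤ ε ^ 2 := by
    have h1 : (1 - γ) ^ 2 * h0star ≤ 1 := by
      rw [div_eq_inv_mul, mul_one] at hcond
      calc (1 - γ) ^ 2 * h0star ≤ h0star⁻¹ * h0star := by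
            exact mul_le_mul_of_nonneg_right hcond hh0.le
        _ = 1 := inv_mul_cancel₀ hh0.ne'
    have h2 : (1 - b) * ε ^ 2 - Real.sqrt (d * D) * G * β ≤ ε ^ 2 := by
      nlinarith [sq_nonneg ε, mul_nonneg (mul_nonneg hsq.le hG.le) hβ0]
    nlinarith
  exact div_le_div_of_nonneg_left (by positivity) hdenpos hden_le
end

section
/- Let d, G, ε > 0, D_SGD, D_NM > 0, b ∈ [0,1), and β ∈ ℝ with 0 ≤ β and β ≤ ((1−b)·√(D_SGD) − √(D_NM))·ε²/(√(d·D_SGD·D_NM)·G). Then (1−b)·ε² − √(d·D_NM)·G·β ≥ √(D_NM/D_SGD)·ε² > 0, and consequently d·D_SGD·G²/ε⁴ ≥ d·D_NM·G²/((1−b)·ε² − √(d·D_NM)·G·β)². -/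
/-- Comparison of minimum numbers of steps under constant learning rates:
the restriction on `β` implies `K_ε(s*_{C,SGD}) = dD_SGD G²/ε⁴ ≥ K_ε(s*_{C,NM}) =
dD_NM G²/((1−b)ε² − √(dD_NM)Gβ)²`, i.e. N-Momentum needs at most as many steps as
SGD. -/
theorem min_steps_NM_le_SGD (d G ε DSGD DNM b β : ℝ)
    (hd : 0 < d) (hG : 0 < G) (hε : 0 < ε) (hDSGD : 0 < DSGD) (hDNM : 0 < DNM)
    (hb0 : 0 ≤ b) (hb1 : b < 1) (hβ0 : 0 ≤ β)
    (hβ : β ≤ ((1 - b) * Real.sqrt DSGD - Real.sqrt DNM) * ε ^ 2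
      / (Real.sqrt (d * DSGD * DNM) * G)) :
    ((1 - b) * ε ^ 2 - Real.sqrt (d * DNM) * G * β
        ≥ Real.sqrt (DNM / DSGD) * ε ^ 2 ∧
      0 < Real.sqrt (DNM / DSGD) * ε ^ 2) ∧
    d * DSGD * G ^ 2 / ε ^ 4
      ≥ d * DNM * G ^ 2 / ((1 - b) * ε ^ 2 - Real.sqrt (d * DNM) * G * β) ^ 2 := by
  have hsd : 0 < Real.sqrt d := Real.sqrt_pos.mpr hd
  have hss : 0 < Real.sqrt DSGD := Real.sqrt_pos.mpr hDSGD
  have hsn : 0 < Real.sqrt DNM := Real.sqrt_pos.mpr hDNM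
  have hsd2 : Real.sqrt d ^ 2 = d := Real.sq_sqrt hd.le
  have hss2 : Real.sqrt DSGD ^ 2 = DSGD := Real.sq_sqrt hDSGD.le
  have hsn2 : Real.sqrt DNM ^ 2 = DNM := Real.sq_sqrt hDNM.le
  have h1 : Real.sqrt (d * DSGD * DNM) = Real.sqrt d * Real.sqrt DSGD * Real.sqrt DNM := by
    rw [Real.sqrt_mul (by positivity), Real.sqrt_mul hd.le]
  have h2 : Real.sqrt (d * DNM) = Real.sqrt d * Real.sqrt DNM := Real.sqrt_mul hd.le _
  have h3 : Real.sqrt (DNM / DSGD) = Real.sqrt DNM / Real.sqrt DSGD := Real.sqrt_div hDNM.le _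
  rw [h1] at hβ
  have hden : 0 < Real.sqrt d * Real.sqrt DSGD * Real.sqrt DNM * G := by positivity
  have hβ' : β * (Real.sqrt d * Real.sqrt DSGD * Real.sqrt DNM * G)
      ≤ ((1 - b) * Real.sqrt DSGD - Real.sqrt DNM) * ε ^ 2 := by
    exact (le_div_iff₀ hden).mp hβ
  have hkey : (1 - b) * ε ^ 2 - Real.sqrt (d * DNM) * G * β
      ≥ Real.sqrt (DNM / DSGD) * ε ^ 2 := by
    rw [h2, h3, ge_iff_le, div_mul_eq_mul_div, div_le_iff₀ hss]
    nlinarith [hss.le, hsd.le, hsn.le]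
  have hpos : 0 < Real.sqrt (DNM / DSGD) * ε ^ 2 := by
    rw [h3]; positivity
  refine ⟨⟨hkey, hpos⟩, ?_⟩
  set X := (1 - b) * ε ^ 2 - Real.sqrt (d * DNM) * G * β with hX
  have hXpos : 0 < X := lt_of_lt_of_le hpos hkey
  have hXge : Real.sqrt DNM / Real.sqrt DSGD * ε ^ 2 ≤ X := by rw [← h3]; exact hkey
  rw [ge_iff_le, div_le_div_iff₀ (by positivity) (by positivity)]
  have hX2 : (Real.sqrt DNM / Real.sqrt DSGD * ε ^ 2) ^ 2 ≤ X ^ 2 := by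
    apply pow_le_pow_left₀ (by positivity) hXge
  have h4 : (Real.sqrt DNM / Real.sqrt DSGD * ε ^ 2) ^ 2 = DNM / DSGD * ε ^ 4 := by
    field_simp
    nlinarith [hsn2, hss2]
  rw [h4] at hX2
  have : d * DSGD * G ^ 2 * (DNM / DSGD * ε ^ 4) = d * DNM * G ^ 2 * ε ^ 4 := by
    field_simp
  calc d * DNM * G ^ 2 * ε ^ 4 = d * DSGD * G ^ 2 * (DNM / DSGD * ε ^ 4) := this.symm
    _ ≤ d * DSGD * G ^ 2 * X ^ 2 :=
        mul_le_mul_of_nonneg_left hX2 (by positivity)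
end

section
/- Let d, G, ε > 0, D_SGD, D_A > 0, b ∈ [0,1), γ ∈ [0,1), h_0^* > 0, H > 0, and β ∈ ℝ with 0 ≤ β and β ≤ ((1−b)·(1−γ)·√(D_SGD·h_0^*) − √(D_A·H))·ε²/((1−γ)·√(d·D_SGD·D_A·h_0^*)·G). Then (1−γ)·√(h_0^*)·((1−b)·ε² − √(d·D_A)·G·β) ≥ √(D_A·H/D_SGD)·ε² > 0, and consequently d·D_SGD·G²/ε⁴ ≥ d·D_A·G²·H/((1−γ)²·((1−b)·ε² − √(d·D_A)·G·β)²·h_0^*). -/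
set_option maxHeartbeats 1000000 in
/-- Comparison of minimum numbers of steps under constant learning rates:
the restriction on `β` implies `K_ε(s*_{C,SGD}) = dD_SGD G²/ε⁴ ≥ K_ε(s*_{C,A}) =
dD_A G² H/((1−γ)²((1−b)ε² − √(dD_A)Gβ)² h0*)`, i.e. the Adam-type optimizer needs
at most as many steps as SGD. -/
theorem min_steps_Adam_le_SGD (d G ε DSGD DA b γ h0star H β : ℝ)
    (hd : 0 < d) (hG : 0 < G) (hε : 0 < ε) (hDSGD : 0 < DSGD) (hDA : 0 < DA)
    (hb0 : 0 ≤ b) (hb1 : b < 1) (hγ0 : 0 ≤ γ) (hγ1 : γ < 1)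
    (hh0 : 0 < h0star) (hH : 0 < H) (hβ0 : 0 ≤ β)
    (hβ : β ≤ ((1 - b) * (1 - γ) * Real.sqrt (DSGD * h0star) - Real.sqrt (DA * H))
        * ε ^ 2 / ((1 - γ) * Real.sqrt (d * DSGD * DA * h0star) * G)) :
    ((1 - γ) * Real.sqrt h0star * ((1 - b) * ε ^ 2 - Real.sqrt (d * DA) * G * β)
        ≥ Real.sqrt (DA * H / DSGD) * ε ^ 2 ∧
      0 < Real.sqrt (DA * H / DSGD) * ε ^ 2) ∧
    d * DSGD * G ^ 2 / ε ^ 4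
      ≥ d * DA * G ^ 2 * H
        / ((1 - γ) ^ 2 * ((1 - b) * ε ^ 2 - Real.sqrt (d * DA) * G * β) ^ 2
            * h0star) := by
  set s1 := Real.sqrt DSGD with hs1
  set s2 := Real.sqrt (d * DA) with hs2
  set s3 := Real.sqrt h0star with hs3
  set s4 := Real.sqrt (DA * H) with hs4
  have hs1p : 0 < s1 := Real.sqrt_pos.2 hDSGD
  have hs2p : 0 < s2 := Real.sqrt_pos.2 (by positivity)
  have hs3p : 0 < s3 := Real.sqrt_pos.2 hh0
  have hs4p : 0 < s4 := Real.sqrt_pos.2 (by positivity)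
  have hs1sq : s1 ^ 2 = DSGD := by rw [hs1]; exact Real.sq_sqrt hDSGD.le
  have hs2sq : s2 ^ 2 = d * DA := by rw [hs2]; exact Real.sq_sqrt (by positivity)
  have hs3sq : s3 ^ 2 = h0star := by rw [hs3]; exact Real.sq_sqrt hh0.le
  have hs4sq : s4 ^ 2 = DA * H := by rw [hs4]; exact Real.sq_sqrt (by positivity)
  clear_value s1 s2 s3 s4
  have e1 : Real.sqrt (DSGD * h0star) = s1 * s3 := by rw [hs1, hs3]; exact Real.sqrt_mul hDSGD.le _
  have e2 : Real.sqrt (d * DSGD * DA * h0star) = s1 * (s2 * s3) := by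
    rw [show d * DSGD * DA * h0star = DSGD * ((d * DA) * h0star) by ring,
      Real.sqrt_mul hDSGD.le, Real.sqrt_mul (by positivity : (0:ℝ) ≤ d * DA), hs1, hs2, hs3]
  have e3 : Real.sqrt (DA * H / DSGD) = s4 / s1 := by
    rw [hs4, hs1, ← Real.sqrt_div (by positivity)]
  rw [e1, e2] at hβ
  have hden : 0 < (1 - γ) * (s1 * (s2 * s3)) * G := by
    have : 0 < 1 - γ := by linarith
    positivity
  have hβ' : β * ((1 - γ) * (s1 * (s2 * s3)) * G)
      ≤ ((1 - b) * (1 - γ) * (s1 * s3) - s4) * ε ^ 2 :=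
    (le_div_iff₀ hden).1 hβ
  have key : (1 - γ) * s3 * ((1 - b) * ε ^ 2 - s2 * G * β) ≥ s4 / s1 * ε ^ 2 := by
    rw [ge_iff_le, div_mul_eq_mul_div, div_le_iff₀ hs1p]
    nlinarith [hβ']
  have hpos : 0 < Real.sqrt (DA * H / DSGD) * ε ^ 2 := by
    rw [e3]; positivity
  refine ⟨⟨by rw [e3]; exact key, hpos⟩, ?_⟩
  have h1γ : 0 < 1 - γ := by linarith
  have hXpos : 0 < (1 - b) * ε ^ 2 - s2 * G * β := by
    have h2 : 0 < s4 / s1 * ε ^ 2 := by positivity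
    have h3 : 0 < (1 - γ) * s3 * ((1 - b) * ε ^ 2 - s2 * G * β) := lt_of_lt_of_le h2 key
    nlinarith [mul_pos h1γ hs3p, h3]
  rw [ge_iff_le, div_le_div_iff₀
    (mul_pos (mul_pos (pow_pos h1γ 2) (pow_pos hXpos 2)) hh0) (pow_pos hε 4)]
  have key2 : ((1 - γ) * s3 * ((1 - b) * ε ^ 2 - s2 * G * β)) ^ 2
      ≥ (s4 / s1 * ε ^ 2) ^ 2 := by
    apply pow_le_pow_left₀ (by positivity) key
  have lhs_eq : (s4 / s1 * ε ^ 2) ^ 2 = DA * H * ε ^ 4 / DSGD := by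
    rw [show (s4 / s1 * ε ^ 2) ^ 2 = s4 ^ 2 * ε ^ 4 / s1 ^ 2 by ring, hs4sq, hs1sq]
  have rhs_eq : ((1 - γ) * s3 * ((1 - b) * ε ^ 2 - s2 * G * β)) ^ 2
      = (1 - γ) ^ 2 * ((1 - b) * ε ^ 2 - s2 * G * β) ^ 2 * s3 ^ 2 := by ring
  rw [lhs_eq, rhs_eq, hs3sq] at key2
  have key3 : DA * H * ε ^ 4
      ≤ (1 - γ) ^ 2 * ((1 - b) * ε ^ 2 - s2 * G * β) ^ 2 * h0star * DSGD :=
    (div_le_iff₀ hDSGD).1 key2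
  nlinarith [mul_le_mul_of_nonneg_left key3 (le_of_lt (mul_pos hd (pow_pos hG 2)))]
end
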